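/- Let P conform to the submodular function z on I, and let Q be a preorder with P ⪯ Q. Then Q conforms to z if and only if P ◀ Q. Equivalently, the set of preorders conforming to z that lie above P coincides with overline(P) = {Q : P ◀ Q}. -/

import Mathlib

open scoped Classical

/-- A preorder on `X`, bundled as a reflexive and transitive relation. -/
structure Preo (X : Type*) where
  le : X → X → Prop
  le_refl : ∀ x, le x x
  le_trans : ∀ {x y z}, le x y → le y z → le x z

namespace Preo

variable {X : Type*}

/-- The refinement partial order `P ⪯ Q` on preorders: `x ≤_P y` implies `x ≤_Q y`. -/
def Le (P Q : Preo X) : Prop := ∀ ⦃a b⦄, P.le a b → Q.le a b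

/-- The opposite preorder. -/
def op (P : Preo X) : Preo X where
  le a b := P.le b a
  le_refl x := P.le_refl x
  le_trans h h' := P.le_trans h' h

/-- The meet (pointwise intersection) of two preorders. -/
def meet (P Q : Preo X) : Preo X where
  le a b := P.le a b ∧ Q.le a b
  le_refl x := ⟨P.le_refl x, Q.le_refl x⟩
  le_trans h h' := ⟨P.le_trans h.1 h'.1, Q.le_trans h.2 h'.2⟩

/-- The join of two preorders: zigzag chains, i.e. the reflexive-transitive closure
of the union of the two relations. -/
def join (P Q : Preo X) : Preo X where
  le a b := Relation.ReflTransGen (fun u v => P.le u v ∨ Q.le u v) a b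
  le_refl _ := Relation.ReflTransGen.refl
  le_trans h h' := Relation.ReflTransGen.trans h h'

/-- The bubble relation: `a` and `b` lie in the same bubble of `P`. -/
def bubRel (P : Preo X) (a b : X) : Prop := P.le a b ∧ P.le b a

/-- `R ◁ P` : `R` is a subdivision of `P`, i.e. `R ⪯ P` and `R = P ∧ (P^op ∨ R)`. -/
def Subdiv (R P : Preo X) : Prop := R.Le P ∧ R = P.meet (P.op.join R)

/-- `P ◀ Q` : `Q` is a contraction of `P`, i.e. `P ⪯ Q` and `Q = P ∨ (P^op ∧ Q)`. -/
def Contr (P Q : Preo X) : Prop := P.Le Q ∧ Q = P.join (P.op.meet Q)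

/-- `K` is a convex subset for the preorder `P`. -/
def ConvexIn (P : Preo X) (K : Set X) : Prop :=
  ∀ ⦃x y z⦄, x ∈ K → y ∈ K → P.le x z → P.le z y → z ∈ K

/-- `K` is connected for (the restriction to `K` of) the preorder `P`:
any two of its elements are joined by a zigzag chain of comparabilities within `K`. -/
def ConnectedIn (P : Preo X) (K : Set X) : Prop :=
  ∀ ⦃x y⦄, x ∈ K → y ∈ K →
    Relation.ReflTransGen (fun u v => u ∈ K ∧ v ∈ K ∧ (P.le u v ∨ P.le v u)) x y

/-- A total preorder. -/
def Total (P : Preo X) : Prop := ∀ a b, P.le a b ∨ P.le b a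

/-- `L` is a linear extension of `P`: `L` is total, `P ⪯ L`, and the bubbles coincide. -/
def IsLinExt (P L : Preo X) : Prop :=
  L.Total ∧ P.Le L ∧ ∀ a b, P.bubRel a b ↔ L.bubRel a b

/-- A finite down-set of the preorder `P`. -/
def IsDownset (P : Preo X) (A : Finset X) : Prop :=
  ∀ ⦃x y⦄, y ∈ A → P.le x y → x ∈ A

/-- A convex finite subset of the preorder `P`. -/
def ConvexF (P : Preo X) (C : Finset X) : Prop :=
  ∀ ⦃x y z⦄, x ∈ C → y ∈ C → P.le x z → P.le z y → z ∈ C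

/-- The down-set generated by a finite set `C`. -/
noncomputable def downClosure [Fintype X] (P : Preo X) (C : Finset X) : Finset X :=
  Finset.univ.filter (fun x => ∃ y ∈ C, P.le x y)

/-- The bubble of an element `a`. -/
noncomputable def bubble [Fintype X] (P : Preo X) (a : X) : Finset X :=
  Finset.univ.filter (fun x => P.le a x ∧ P.le x a)

/-- The set of bubbles of `P`. -/
noncomputable def bubbles [Fintype X] (P : Preo X) : Finset (Finset X) :=
  Finset.univ.image (fun a => P.bubble a)

/-- `R` is a positive sub-preorder of `P`: in any loop
`x = x₀ ≤_R x₁ ≥_P x₂ ≤_R ⋯ ≤_R x_{2k-1} ≥_P x_{2k} = x`,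
every descending step `≥_P` is actually `≥_R`. -/
def PositiveSub (R P : Preo X) : Prop :=
  ∀ (k : ℕ) (x : ℕ → X), x (2 * k) = x 0 →
    (∀ i < k, R.le (x (2 * i)) (x (2 * i + 1))) →
    (∀ i < k, P.le (x (2 * i + 2)) (x (2 * i + 1))) →
    ∀ i < k, R.le (x (2 * i + 2)) (x (2 * i + 1))

end Preo

section Submod

variable {I : Type*} [Fintype I] [DecidableEq I]

/-- A function `z : P(I) → ℝ ∪ {∞}` is submodular if
`z(S ∪ T) + z(S ∩ T) ≤ z(S) + z(T)` for all `S, T`. -/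
def Submodular (z : Finset I → WithTop ℝ) : Prop :=
  ∀ S T : Finset I, z (S ∪ T) + z (S ∩ T) ≤ z S + z T

/-- The corestriction `z_{/A}` : `U ↦ z(A ∪ U) − z(A)` (meaningful when `z A ≠ ⊤`). -/
noncomputable def coRes (z : Finset I → WithTop ℝ) (A U : Finset I) : WithTop ℝ :=
  z (A ∪ U) + ((-(z A).untopD 0 : ℝ) : WithTop ℝ)

/-- The extended generalized permutahedron of `z`:
`x_I = z(I)` and `x_A ≤ z(A)` whenever `z(A) < ∞`. -/
def EGP (z : Finset I → WithTop ℝ) : Set (I → ℝ) :=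
  {x | ((∑ i, x i : ℝ) : WithTop ℝ) = z Finset.univ ∧
       ∀ A : Finset I, ((∑ i ∈ A, x i : ℝ) : WithTop ℝ) ≤ z A}

/-- `z` restricted to subsets of `C` decomposes as the product of its restrictions to `S`
and `T`, where `C = S ⊔ T`. -/
def SplitsAlong (z : Finset I → WithTop ℝ) (C S T : Finset I) : Prop :=
  Disjoint S T ∧ S ∪ T = C ∧ ∀ E ⊆ C, z E = z (E ∩ S) + z (E ∩ T)

/-- `z` restricted to subsets of `C` is indecomposable. -/
def IndecompOn (z : Finset I → WithTop ℝ) (C : Finset I) : Prop :=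
  ∀ S T : Finset I, S.Nonempty → T.Nonempty → ¬ SplitsAlong z C S T

/-- `fam` is the partition underlying a factorization of `z` into indecomposable
extended Boolean functions. -/
def IsIndecompFactorization (z : Finset I → WithTop ℝ) (fam : Finset (Finset I)) : Prop :=
  (∀ B ∈ fam, B.Nonempty) ∧
  (∀ B ∈ fam, ∀ B' ∈ fam, B ≠ B' → Disjoint B B') ∧
  fam.sup id = Finset.univ ∧
  (∀ E : Finset I, z E = ∑ B ∈ fam, z (E ∩ B)) ∧
  ∀ B ∈ fam, IndecompOn z B

/-- A family of finite subsets of `I` forming a topology on `I`. -/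
def IsTopologyFam (F : Set (Finset I)) : Prop :=
  ∅ ∈ F ∧ Finset.univ ∈ F ∧ (∀ A ∈ F, ∀ B ∈ F, A ∪ B ∈ F) ∧ ∀ A ∈ F, ∀ B ∈ F, A ∩ B ∈ F

/-- The preorder `P` is compatible with the submodular function `z`. -/
def Compatible (z : Finset I → WithTop ℝ) (P : Preo I) : Prop :=
  (∀ A : Finset I, P.IsDownset A → z A ≠ ⊤) ∧
  ∀ A B : Finset I, P.IsDownset A → P.IsDownset B → A ⊆ B →
    ∀ C₁ C₂ : Finset I, Disjoint C₁ C₂ → C₁ ∪ C₂ = B \ A →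
      (∀ x ∈ C₁, ∀ y ∈ C₂, ¬ P.le x y ∧ ¬ P.le y x) →
      ∀ U ⊆ B \ A, coRes z A U = coRes z A (U ∩ C₁) + coRes z A (U ∩ C₂)

/-- For a convex subset `C` of `P`, the function `z_C : U ↦ z(A ∪ U) − z(A)`, where
`A = (↓C) \ C` with `↓C` the down-set generated by `C`. -/
noncomputable def zConv (z : Finset I → WithTop ℝ) (P : Preo I) (C U : Finset I) :
    WithTop ℝ :=
  coRes z (P.downClosure C \ C) U

/-- The preorder `P` conforms to the submodular function `z`: it is compatible with `z`
and every product decomposition of `z_C`, for `C` convex in `P`, comes from a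
disconnected decomposition of the preorder induced on `C`. -/
def Conforms (z : Finset I → WithTop ℝ) (P : Preo I) : Prop :=
  Compatible z P ∧
  ∀ C : Finset I, P.ConvexF C →
    ∀ C₁ C₂ : Finset I, Disjoint C₁ C₂ → C₁ ∪ C₂ = C →
      (∀ U ⊆ C, zConv z P C U = zConv z P C (U ∩ C₁) + zConv z P C (U ∩ C₂)) →
      ∀ x ∈ C₁, ∀ y ∈ C₂, ¬ P.le x y ∧ ¬ P.le y x

/-- The preorder `pre(z)` associated to `z`: `x ≤ y` iff every `A` with `z(A) < ∞`
("open set") containing `y` contains `x`. -/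
def preZ (z : Finset I → WithTop ℝ) : Preo I where
  le x y := ∀ A : Finset I, z A ≠ ⊤ → y ∈ A → x ∈ A
  le_refl _ := fun _ _ h => h
  le_trans h h' := fun A hA hy => h A hA (h' A hA hy)

/-- The preorder associated (by the Alexandroff correspondence) to a family of subsets. -/
def preOfFam (F : Set (Finset I)) : Preo I where
  le x y := ∀ A ∈ F, y ∈ A → x ∈ A
  le_refl _ := fun _ _ h => h
  le_trans h h' := fun A hA hy => h A hA (h' A hA hy)

/-- `Alin(P, z)`: the affine space cut out by `x_A = z(A)` for `A` a down-set of `P`. -/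
def Alin (z : Finset I → WithTop ℝ) (P : Preo I) : Set (I → ℝ) :=
  {x | ∀ A : Finset I, P.IsDownset A → ((∑ i ∈ A, x i : ℝ) : WithTop ℝ) = z A}

/-- `AlinBu(P, z)`: the affine space cut out by `x_C = z_C(C)` for `C` a bubble of `P`. -/
def AlinBu (z : Finset I → WithTop ℝ) (P : Preo I) : Set (I → ℝ) :=
  {x | ∀ a : I, ((∑ i ∈ P.bubble a, x i : ℝ) : WithTop ℝ) = zConv z P (P.bubble a) (P.bubble a)}

/-- `Φ_z(P)`: the (possibly empty) face of `Π(z)` cut out by the equalities `x_A = z(A)`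
for `A` a down-set of `P`. -/
def Phi (z : Finset I → WithTop ℝ) (P : Preo I) : Set (I → ℝ) :=
  {x | x ∈ EGP z ∧ ∀ A : Finset I, P.IsDownset A → ((∑ i ∈ A, x i : ℝ) : WithTop ℝ) = z A}

/-- `Ψ_z(G)`: the family of sets `A` with `z(A) < ∞` on which `x_A = z(A)` for all `x ∈ G`. -/
def PsiFam (z : Finset I → WithTop ℝ) (G : Set (I → ℝ)) : Set (Finset I) :=
  {A | z A ≠ ⊤ ∧ ∀ x ∈ G, ((∑ i ∈ A, x i : ℝ) : WithTop ℝ) = z A}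

/-- `Ψ_z(G)` as a preorder. -/
def PsiPre (z : Finset I → WithTop ℝ) (G : Set (I → ℝ)) : Preo I :=
  preOfFam (PsiFam z G)

/-- `z_P = ∏_{C ∈ b(P)} z_C`: the product over all bubbles of `P`. -/
noncomputable def zP (z : Finset I → WithTop ℝ) (P : Preo I) : Finset I → WithTop ℝ :=
  fun E => ∑ C ∈ P.bubbles, zConv z P C (E ∩ C)

/-- The restriction `z|_S` of `z` to subsets of `S`. -/
def restrictFn (z : Finset I → WithTop ℝ) (S : Finset I) :
    Finset {x : I // x ∈ S} → WithTop ℝ :=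
  fun U => z (U.map (Function.Embedding.subtype fun x => x ∈ S))

/-- The corestriction `z_{/S}` of `z`, on subsets of `I ∖ S`. -/
noncomputable def coresFn (z : Finset I → WithTop ℝ) (S : Finset I) :
    Finset {x : I // x ∉ S} → WithTop ℝ :=
  fun U => z (S ∪ U.map (Function.Embedding.subtype fun x => x ∉ S)) +
    ((-(z S).untopD 0 : ℝ) : WithTop ℝ)

/-- The restriction `P|_S` of a preorder to `S`. -/
def restrictPre (P : Preo I) (S : Finset I) : Preo {x : I // x ∈ S} where
  le a b := P.le a b
  le_refl a := P.le_refl a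
  le_trans h h' := P.le_trans h h'

/-- The corestriction `P_{/S}` of a preorder, on `I ∖ S`. -/
def coresPre (P : Preo I) (S : Finset I) : Preo {x : I // x ∉ S} where
  le a b := P.le a b
  le_refl a := P.le_refl a
  le_trans h h' := P.le_trans h h'

end Submod

/-!
For `P ⪯ Q` and a `Q`-convex set `C`, the down-sets `(↓_P C) ∖ C ⊆ (↓_Q C) ∖ C` differ by a part
that is `P`-incomparable to `C`; compatibility of `P` splits it off, so `P` and `Q` define the
same function `z_C`. Hence `z_C` factors along every `P`-disconnection of `C`.

If `Q` conforms, such a factorisation is a `Q`-disconnection, so for `a ≤_Q b` the points `a`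
and `b` are joined by a zigzag of `P`-comparabilities inside `[a, b]_Q`. Walking along it, each
step `u → v` is `u ≤_P v`, or `v ≤_P u` with `u ≤_Q v`, or else `b ∉ [a, v]_Q` and induction on
`#[a, b]_Q` gives `a ≤ v` in `P ∨ (P^op ∧ Q)`. Conversely, if `Q = P ∨ (P^op ∧ Q)` then every
`Q`-relation is a chain of `P`-comparabilities, which cannot cross a `P`-disconnection of a
`Q`-convex set.
-/

namespace Preo

variable {X : Type*} {P Q R : Preo X}

theorem ext (h : ∀ a b, P.le a b ↔ Q.le a b) : P = Q := by
  obtain ⟨p, _, _⟩ := P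
  obtain ⟨q, _, _⟩ := Q
  obtain rfl : p = q := funext₂ fun a b => propext (h a b)
  rfl

theorem join_le (hP : P.Le Q) (hR : R.Le Q) : (P.join R).Le Q := by
  intro a b h
  induction h with
  | refl => exact Q.le_refl a
  | tail _ hstep ih => exact Q.le_trans ih (hstep.elim (hP ·) (hR ·))

theorem meet_le_right : (P.meet Q).Le Q :=
  fun _ _ h => h.2

theorem IsDownset.of_le (hPQ : P.Le Q) {A : Finset X} (h : Q.IsDownset A) : P.IsDownset A :=
  fun _ _ hy hxy => h hy (hPQ hxy)

theorem ConvexF.of_le (hPQ : P.Le Q) {C : Finset X} (h : Q.ConvexF C) : P.ConvexF C :=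
  fun _ _ _ hx hy h₁ h₂ => h hx hy (hPQ h₁) (hPQ h₂)

section Fintype

variable [Fintype X]

theorem mem_downClosure {C : Finset X} {x : X} : x ∈ P.downClosure C ↔ ∃ y ∈ C, P.le x y := by
  simp [downClosure]

theorem subset_downClosure {C : Finset X} : C ⊆ P.downClosure C :=
  fun x hx => mem_downClosure.2 ⟨x, hx, P.le_refl x⟩

theorem isDownset_downClosure {C : Finset X} : P.IsDownset (P.downClosure C) := by
  intro x y hy hxy
  obtain ⟨c, hc, hyc⟩ := mem_downClosure.1 hy
  exact mem_downClosure.2 ⟨c, hc, P.le_trans hxy hyc⟩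

theorem ConvexF.isDownset_downClosure_sdiff [DecidableEq X] {C : Finset X} (hC : P.ConvexF C) :
    P.IsDownset (P.downClosure C \ C) := by
  intro x y hy hxy
  rw [Finset.mem_sdiff] at hy ⊢
  obtain ⟨c, hc, hyc⟩ := mem_downClosure.1 hy.1
  exact ⟨isDownset_downClosure hy.1 hxy, fun hx => hy.2 (hC hx hc hxy hyc)⟩

theorem downClosure_sdiff_subset_of_le [DecidableEq X] (hPQ : P.Le Q) {C : Finset X} :
    P.downClosure C \ C ⊆ Q.downClosure C \ C := by
  intro x hx
  rw [Finset.mem_sdiff, mem_downClosure] at hx ⊢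
  obtain ⟨⟨c, hc, hxc⟩, hxC⟩ := hx
  exact ⟨⟨c, hc, hPQ hxc⟩, hxC⟩

noncomputable def Icc (P : Preo X) (a b : X) : Finset X :=
  Finset.univ.filter fun x => P.le a x ∧ P.le x b

theorem mem_Icc {a b x : X} : x ∈ P.Icc a b ↔ P.le a x ∧ P.le x b := by
  simp [Icc]

theorem convexF_Icc {a b : X} : P.ConvexF (P.Icc a b) := by
  intro x y t hx hy hxt hty
  exact mem_Icc.2 ⟨P.le_trans (mem_Icc.1 hx).1 hxt, P.le_trans hty (mem_Icc.1 hy).2⟩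

end Fintype

def AdjIn (P : Preo X) (C : Finset X) (u v : X) : Prop :=
  u ∈ C ∧ v ∈ C ∧ (P.le u v ∨ P.le v u)

noncomputable def componentIn (P : Preo X) (C : Finset X) (a : X) : Finset X :=
  C.filter (Relation.ReflTransGen (P.AdjIn C) a)

theorem not_le_of_mem_componentIn [DecidableEq X] {C : Finset X} {a x y : X}
    (hx : x ∈ P.componentIn C a) (hy : y ∈ C \ P.componentIn C a) : ¬P.le x y ∧ ¬P.le y x := by
  rw [componentIn, Finset.mem_filter] at hx
  rw [Finset.mem_sdiff, componentIn, Finset.mem_filter] at hy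
  exact ⟨fun h => hy.2 ⟨hy.1, hx.2.tail ⟨hx.1, hy.1, .inl h⟩⟩,
    fun h => hy.2 ⟨hy.1, hx.2.tail ⟨hx.1, hy.1, .inr h⟩⟩⟩

theorem not_le_of_le_join_op_meet [DecidableEq X] (hPQ : P.Le Q)
    (hQ : Q.Le (P.join (P.op.meet Q))) {C C₁ C₂ : Finset X} (hC : Q.ConvexF C)
    (hd : Disjoint C₁ C₂) (hu : C₁ ∪ C₂ = C)
    (hinc : ∀ x ∈ C₁, ∀ y ∈ C₂, ¬P.le x y ∧ ¬P.le y x) {x y : X} (hx : x ∈ C₁) (hy : y ∈ C₂) :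
    ¬Q.le x y := by
  have hJQ : (P.join (P.op.meet Q)).Le Q := join_le hPQ meet_le_right
  have hxC : x ∈ C := hu ▸ Finset.mem_union_left _ hx
  have hyC : y ∈ C := hu ▸ Finset.mem_union_right _ hy
  suffices key : ∀ v, (P.join (P.op.meet Q)).le x v → Q.le v y → v ∈ C₁ from
    fun hxy => Finset.disjoint_left.1 hd (key y (hQ hxy) (Q.le_refl y)) hy
  intro v hxv
  induction hxv with
  | refl => exact fun _ => hx
  | @tail w v hxw hwv ih =>
    intro hvy
    have hwv' : Q.le w v := hJQ (Relation.ReflTransGen.single hwv)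
    have hw : w ∈ C₁ := ih (Q.le_trans hwv' hvy)
    have hv : v ∈ C₁ ∪ C₂ := hu ▸ hC hxC hyC (Q.le_trans (hJQ hxw) hwv') hvy
    refine (Finset.mem_union.1 hv).resolve_right fun hv₂ => ?_
    obtain hle | hle := hwv
    · exact (hinc w hw v hv₂).1 hle
    · exact (hinc w hw v hv₂).2 hle.1

end Preo

section Conforming

variable {I : Type*} [DecidableEq I] {z : Finset I → WithTop ℝ} {P Q : Preo I}

theorem Compatible.of_le (hP : Compatible z P) (hPQ : P.Le Q) : Compatible z Q := by
  refine ⟨fun A hA => hP.1 A (hA.of_le hPQ), ?_⟩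
  intro A B hA hB hAB C₁ C₂ hd hu hinc
  exact hP.2 A B (hA.of_le hPQ) (hB.of_le hPQ) hAB C₁ C₂ hd hu
    fun x hx y hy => ⟨mt (@hPQ x y) (hinc x hx y hy).1, mt (@hPQ y x) (hinc x hx y hy).2⟩

theorem coRes_eq_of_add {A A' U : Finset I} (hAA' : A ⊆ A') (hA : z A ≠ ⊤) (hA' : z A' ≠ ⊤)
    (h : coRes z A ((A' \ A) ∪ U) = coRes z A (A' \ A) + coRes z A U) :
    coRes z A' U = coRes z A U := by
  obtain ⟨p, hp⟩ := WithTop.ne_top_iff_exists.1 hA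
  obtain ⟨q, hq⟩ := WithTop.ne_top_iff_exists.1 hA'
  unfold coRes at h ⊢
  rw [← Finset.union_assoc, Finset.union_sdiff_of_subset hAA', ← hp, ← hq,
    WithTop.untopD_coe] at h
  rw [← hp, ← hq, WithTop.untopD_coe, WithTop.untopD_coe]
  generalize z (A' ∪ U) = x at h ⊢
  generalize z (A ∪ U) = y at h ⊢
  induction x using WithTop.recTopCoe <;> induction y using WithTop.recTopCoe
  · rfl
  · norm_cast at h
  · simp at h
  · norm_cast at h ⊢
    linarith

variable [Fintype I]

def ZConvSplits (z : Finset I → WithTop ℝ) (P : Preo I) (C C₁ C₂ : Finset I) : Prop :=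
  ∀ U ⊆ C, zConv z P C U = zConv z P C (U ∩ C₁) + zConv z P C (U ∩ C₂)

theorem Compatible.zConvSplits (hP : Compatible z P) {C C₁ C₂ : Finset I} (hC : P.ConvexF C)
    (hd : Disjoint C₁ C₂) (hu : C₁ ∪ C₂ = C)
    (hinc : ∀ x ∈ C₁, ∀ y ∈ C₂, ¬P.le x y ∧ ¬P.le y x) : ZConvSplits z P C C₁ C₂ := by
  unfold ZConvSplits
  have hdiff : P.downClosure C \ (P.downClosure C \ C) = C := by
    rw [Finset.sdiff_sdiff_self_left, Finset.inter_eq_right.2 Preo.subset_downClosure]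
  intro U hU
  rw [← hdiff] at hu hU
  exact hP.2 _ _ hC.isDownset_downClosure_sdiff Preo.isDownset_downClosure Finset.sdiff_subset
    C₁ C₂ hd hu hinc U hU

theorem Compatible.zConv_eq_of_le (hP : Compatible z P) (hPQ : P.Le Q) {C : Finset I}
    (hC : Q.ConvexF C) {V : Finset I} (hV : V ⊆ C) : zConv z Q C V = zConv z P C V := by
  set AP := P.downClosure C \ C
  set AQ := Q.downClosure C \ C
  set D := AQ \ AP
  have hAP : P.IsDownset AP := (hC.of_le hPQ).isDownset_downClosure_sdiff
  have hAPQ : AP ⊆ AQ := Preo.downClosure_sdiff_subset_of_le hPQ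
  have hDC : Disjoint D C :=
    Finset.disjoint_of_subset_left Finset.sdiff_subset Finset.sdiff_disjoint
  have hunion : D ∪ C = Q.downClosure C \ AP := by
    ext x
    have := @Preo.subset_downClosure _ Q _ C x
    simp only [D, AQ, AP, Finset.mem_union, Finset.mem_sdiff]
    tauto
  have hinc : ∀ d ∈ D, ∀ c ∈ C, ¬P.le d c ∧ ¬P.le c d := by
    intro d hd c hc
    simp only [D, AQ, AP, Finset.mem_sdiff, Preo.mem_downClosure, not_and, not_not] at hd
    obtain ⟨⟨⟨c', hc', hdc'⟩, hdC⟩, hdP⟩ := hd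
    exact ⟨fun h => hdC (hdP ⟨c, hc, h⟩), fun h => hdC (hC hc hc' (hPQ h) hdc')⟩
  have hsplit := hP.2 AP _ hAP (Preo.isDownset_downClosure.of_le hPQ)
    (hAPQ.trans Finset.sdiff_subset) D C hDC hunion hinc (D ∪ V)
    (hunion ▸ Finset.union_subset_union_right hV)
  rw [Finset.union_inter_cancel_left, Finset.union_inter_distrib_right,
    Finset.disjoint_iff_inter_eq_empty.1 hDC, Finset.empty_union,
    Finset.inter_eq_left.2 hV] at hsplit
  exact coRes_eq_of_add hAPQ (hP.1 _ hAP) (hP.1 _ (hC.isDownset_downClosure_sdiff.of_le hPQ))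
    hsplit

theorem Compatible.zConvSplits_iff (hP : Compatible z P) (hPQ : P.Le Q) {C C₁ C₂ : Finset I}
    (hC : Q.ConvexF C) :
    ZConvSplits z Q C C₁ C₂ ↔ ZConvSplits z P C C₁ C₂ := by
  unfold ZConvSplits
  refine forall₂_congr fun U hU => ?_
  rw [hP.zConv_eq_of_le hPQ hC hU,
    hP.zConv_eq_of_le hPQ hC (Finset.inter_subset_left.trans hU),
    hP.zConv_eq_of_le hPQ hC (Finset.inter_subset_left.trans hU)]

theorem Compatible.reflTransGen_adjIn_of_le (hP : Compatible z P) (hPQ : P.Le Q)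
    (hQ : Conforms z Q) {C : Finset I} (hC : Q.ConvexF C) {a b : I} (ha : a ∈ C) (hb : b ∈ C)
    (hab : Q.le a b) : Relation.ReflTransGen (P.AdjIn C) a b := by
  set C₁ := P.componentIn C a
  have hC₁ : C₁ ⊆ C := Finset.filter_subset _ _
  have hsplit : ZConvSplits z Q C C₁ (C \ C₁) :=
    (hP.zConvSplits_iff hPQ hC).2 <|
      hP.zConvSplits (hC.of_le hPQ) Finset.disjoint_sdiff (Finset.union_sdiff_of_subset hC₁)
        fun _ hx _ hy => P.not_le_of_mem_componentIn hx hy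
  by_contra hne
  have hbC₁ : b ∈ C \ C₁ := Finset.mem_sdiff.2 ⟨hb, fun h => hne (Finset.mem_filter.1 h).2⟩
  exact (hQ.2 C hC C₁ (C \ C₁) Finset.disjoint_sdiff (Finset.union_sdiff_of_subset hC₁) hsplit
    a (Finset.mem_filter.2 ⟨ha, .refl⟩) b hbC₁).1 hab

theorem Compatible.le_join_op_meet (hP : Compatible z P) (hPQ : P.Le Q) (hQ : Conforms z Q) :
    Q.Le (P.join (P.op.meet Q)) := by
  suffices H : ∀ n a b, (Q.Icc a b).card = n → Q.le a b → (P.join (P.op.meet Q)).le a b from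
    fun a b => H _ a b rfl
  intro n
  induction n using Nat.strong_induction_on with
  | _ n ih =>
  intro a b hn hab
  have hbC : b ∈ Q.Icc a b := Preo.mem_Icc.2 ⟨hab, Q.le_refl b⟩
  suffices key : ∀ v, Relation.ReflTransGen (P.AdjIn (Q.Icc a b)) a v →
      (P.join (P.op.meet Q)).le a v from
    key b <| hP.reflTransGen_adjIn_of_le hPQ hQ Preo.convexF_Icc
      (Preo.mem_Icc.2 ⟨Q.le_refl a, hab⟩) hbC hab
  intro v hav
  induction hav with
  | refl => exact Preo.le_refl _ a
  | @tail u v _ huv ihu =>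
    obtain ⟨hu, hv, hle | hle⟩ := huv
    · exact ihu.tail (.inl hle)
    by_cases hQuv : Q.le u v
    · exact ihu.tail (.inr ⟨hle, hQuv⟩)
    -- otherwise `b ∉ [a, v]`, so the interval `[a, v]` is strictly smaller than `[a, b]`
    have hsub : Q.Icc a v ⊂ Q.Icc a b := by
      refine Finset.ssubset_iff_of_subset (fun x hx => ?_) |>.2 ⟨b, hbC, fun hb => ?_⟩
      · exact Preo.mem_Icc.2 ⟨(Preo.mem_Icc.1 hx).1,
          Q.le_trans (Preo.mem_Icc.1 hx).2 (Preo.mem_Icc.1 hv).2⟩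
      · exact hQuv (Q.le_trans (Preo.mem_Icc.1 hu).2 (Preo.mem_Icc.1 hb).2)
    exact ih _ (hn ▸ Finset.card_lt_card hsub) a v rfl (Preo.mem_Icc.1 hv).1

end Conforming

theorem conforming_above_iff_contraction_general
    {I : Type*} [Fintype I] [DecidableEq I]
    (z : Finset I → WithTop ℝ) (P Q : Preo I) (hP : Conforms z P) (hPQ : P.Le Q) :
    Conforms z Q ↔ Preo.Contr P Q := by
  refine ⟨fun hQ => ⟨hPQ, Preo.ext fun a b => ⟨fun h => hP.1.le_join_op_meet hPQ hQ h,
    fun h => Preo.join_le hPQ Preo.meet_le_right h⟩⟩, fun hcontr => ⟨hP.1.of_le hPQ, ?_⟩⟩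
  have hQJ : Q.Le (P.join (P.op.meet Q)) := fun a b h => hcontr.2 ▸ h
  intro C hC C₁ C₂ hd hu hsplit x hx y hy
  have hinc := hP.2 C (hC.of_le hPQ) C₁ C₂ hd hu ((hP.1.zConvSplits_iff hPQ hC).1 hsplit)
  exact ⟨Preo.not_le_of_le_join_op_meet hPQ hQJ hC hd hu hinc hx hy,
    Preo.not_le_of_le_join_op_meet hPQ hQJ hC hd.symm (Finset.union_comm C₂ C₁ ▸ hu)
      (fun u hu v hv => (hinc v hv u hu).symm) hy hx⟩

/-- Let `P` conform to the submodular function `z` and let `P ⪯ Q`.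
Then `Q` conforms to `z` iff `P ◀ Q`; i.e. the conforming preorders above `P` are
exactly `overline(P)`. -/
theorem conforming_above_iff_contraction
    {I : Type*} [Fintype I] [DecidableEq I]
    (z : Finset I → WithTop ℝ) (hz0 : z ∅ = 0) (hzI : z Finset.univ ≠ ⊤)
    (hsub : Submodular z) (P Q : Preo I) (hP : Conforms z P) (hPQ : P.Le Q) :
    Conforms z Q ↔ Preo.Contr P Q :=
  conforming_above_iff_contraction_general z P Q hP hPQ
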